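/- arXiv:2602.19760 — 3 statements merged into one kernel-verified Lean document; each statement's English description precedes it below -/
import Mathlib

section
/- For every real p with 1 < p ≤ 8, the quantity ((p+2)/p) · ((p+1)(p+2))^{-1/p} · 4^{1/p} · (1 - 2^{-p}) is strictly less than 1. -/
/-!
For the quantity `B_p` of the theorem, `logBPow p = log (B_p ^ p)`, and the claim is that it is
negative. Since it vanishes at `p = 1`, near `p = 1` every logarithm is bounded by a tangent
line, which yields `logBPow p ≤ (p - 1) · c(p)` with `c(p) < 0` for `p ≤ 1.3`. On `[1.3, 8]` we
cut into seven intervals `[a, b]` with endpoints in `(1/10)ℤ`: there `p log (1 + 2/p)` is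
increasing (Bernoulli's inequality), `p log (1 - 2^(-p)) ≤ a log (1 - r)` for a rational
`r ≤ 2^(-b)`, and `log ((p + 1)(p + 2))` is at least its value at `a`. Multiplied by `10`, the
resulting bound is the logarithm of a ratio of rationals, which is checked to be `< 1`.
-/

open Real

noncomputable def logBPow (p : ℝ) : ℝ :=
  p * log ((p + 2) / p) + p * log (1 - 2 ^ (-p)) + log 4 - log ((p + 1) * (p + 2))

lemma log_le_log_add_div_sub_one {x a : ℝ} (hx : 0 < x) (ha : 0 < a) :
    log x ≤ log a + x / a - 1 := by
  have h := log_le_sub_one_of_pos (div_pos hx ha)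
  rw [log_div hx.ne' ha.ne'] at h
  linarith

lemma rpow_mul_one_add_mul_log_le_rpow {b : ℝ} (hb : 0 < b) (x y : ℝ) :
    b ^ y * (1 + (x - y) * log b) ≤ b ^ x := by
  calc b ^ y * (1 + (x - y) * log b) ≤ b ^ y * b ^ (x - y) := by
        gcongr
        rw [rpow_def_of_pos hb]
        linarith [add_one_le_exp (log b * (x - y))]
    _ = b ^ x := by rw [← rpow_add hb, add_sub_cancel]

lemma monotoneOn_mul_log_add_div {c : ℝ} (hc : 0 ≤ c) :
    MonotoneOn (fun p ↦ p * log ((p + c) / p)) (Set.Ioi 0) := by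
  intro p (hp : 0 < p) b (hb : 0 < b) hpb
  have bernoulli : ((p + c) / p) ^ (p / b) ≤ (b + c) / b := by
    have hs : -1 ≤ c / p := by linarith [div_nonneg hc hp.le]
    have h := rpow_one_add_le_one_add_mul_self hs (div_nonneg hp.le hb.le) ((div_le_one hb).2 hpb)
    convert h using 1 <;> field_simp
  have h := log_le_log (by positivity) bernoulli
  rw [log_rpow (by positivity)] at h
  calc p * log ((p + c) / p) = b * (p / b * log ((p + c) / p)) := by field_simp
    _ ≤ b * log ((b + c) / b) := by gcongr

lemma one_sub_two_rpow_neg_pos {p : ℝ} (hp : 0 < p) : 0 < 1 - (2 : ℝ) ^ (-p) :=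
  sub_pos.2 (rpow_lt_one_of_one_lt_of_neg one_lt_two (neg_neg_of_pos hp))

lemma eq_exp_logBPow_div {p : ℝ} (hp : 0 < p) :
    ((p + 2) / p) * ((p + 1) * (p + 2)) ^ (-(1 : ℝ) / p) * 4 ^ (1 / p) * (1 - 2 ^ (-p)) =
      exp (logBPow p / p) := by
  have h2p := one_sub_two_rpow_neg_pos hp
  have hsplit : logBPow p / p = log ((p + 2) / p) + log ((p + 1) * (p + 2)) * (-1 / p) +
      log 4 * (1 / p) + log (1 - 2 ^ (-p)) := by
    unfold logBPow; field_simp; ring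
  rw [hsplit, exp_add, exp_add, exp_add, ← rpow_def_of_pos (by positivity),
    ← rpow_def_of_pos (by norm_num), exp_log (by positivity), exp_log h2p]

lemma logBPow_le_mul_sub_one {p : ℝ} (hp : 0 < p) :
    logBPow p ≤ (p - 1) * (log 3 - 2 / 3 + (p - 1) * log 2 - 1 / (p + 1) - 1 / (p + 2)) := by
  have h2p := one_sub_two_rpow_neg_pos hp
  -- tangent lines of `log` at `3`, `1/2`, `p + 1`, `p + 2`, and of `2 ^ (-p)` at `p = 1`
  have tangent_three := log_le_log_add_div_sub_one (by positivity : 0 < (p + 2) / p) three_pos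
  have tangent_half := log_le_log_add_div_sub_one h2p one_half_pos
  have tangent_rpow := rpow_mul_one_add_mul_log_le_rpow two_pos (-p) (-1)
  have tangent_succ := log_le_log_add_div_sub_one two_pos (by linarith : 0 < p + 1)
  have tangent_succ_succ := log_le_log_add_div_sub_one three_pos (by linarith : 0 < p + 2)
  have first : p * log ((p + 2) / p) ≤ p * log 3 + (p + 2) / 3 - p := by
    have h := mul_le_mul_of_nonneg_left tangent_three hp.le
    have expand : p * (log 3 + (p + 2) / p / 3 - 1) = p * log 3 + (p + 2) / 3 - p := by field_simp
    linarith
  have second : p * log (1 - 2 ^ (-p)) ≤ p * (p - 2) * log 2 := by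
    rw [one_div, log_inv, div_inv_eq_mul] at tangent_half
    rw [rpow_neg_one] at tangent_rpow
    rw [mul_assoc]
    refine mul_le_mul_of_nonneg_left ?_ hp.le
    linarith
  have hlog4 : log 4 = 2 * log 2 := by
    rw [show (4 : ℝ) = 2 ^ 2 by norm_num, log_pow]; norm_num
  have hsucc : 2 / (p + 1) - 1 = -((p - 1) * (1 / (p + 1))) := by field_simp; ring
  have hsucc_succ : 3 / (p + 2) - 1 = -((p - 1) * (1 / (p + 2))) := by field_simp; ring
  unfold logBPow
  rw [log_mul (by linarith) (by linarith), hlog4]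
  linarith

lemma logBPow_neg_of_one_lt_of_le {p : ℝ} (hp1 : 1 < p) (hp : p ≤ 13 / 10) : logBPow p < 0 := by
  refine (logBPow_le_mul_sub_one (by linarith)).trans_lt (mul_neg_of_pos_of_neg (by linarith) ?_)
  have h3 := log_three_lt_d9
  have h2 := log_two_lt_d9
  have hsucc : 10 / 23 ≤ 1 / (p + 1) := by
    rw [div_le_div_iff₀ (by norm_num) (by linarith)]; linarith
  have hsucc_succ : 10 / 33 ≤ 1 / (p + 2) := by
    rw [div_le_div_iff₀ (by norm_num) (by linarith)]; linarith
  have hlog2 : (p - 1) * log 2 ≤ 3 / 10 * log 2 := by gcongr; linarith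
  linarith

lemma logBPow_le_of_mem_Icc {a b p r : ℝ} (ha : 0 < a) (hap : a ≤ p) (hpb : p ≤ b)
    (hrb : r ≤ 2 ^ (-b)) :
    logBPow p ≤ b * log ((b + 2) / b) + a * log (1 - r) + log 4 - log ((a + 1) * (a + 2)) := by
  have hp : 0 < p := ha.trans_le hap
  have h2p := one_sub_two_rpow_neg_pos hp
  have h2bp : (2 : ℝ) ^ (-b) ≤ 2 ^ (-p) :=
    rpow_le_rpow_of_exponent_le one_le_two (neg_le_neg hpb)
  have hlog_nonpos : log (1 - 2 ^ (-p)) ≤ 0 :=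
    log_nonpos h2p.le (by linarith [rpow_pos_of_pos two_pos (-p)])
  have first : p * log ((p + 2) / p) ≤ b * log ((b + 2) / b) :=
    monotoneOn_mul_log_add_div zero_le_two hp (hp.trans_le hpb) hpb
  have second : p * log (1 - 2 ^ (-p)) ≤ a * log (1 - r) :=
    calc p * log (1 - 2 ^ (-p)) ≤ a * log (1 - 2 ^ (-p)) :=
          mul_le_mul_of_nonpos_right hap hlog_nonpos
      _ ≤ a * log (1 - r) := by gcongr; linarith
  have third : log ((a + 1) * (a + 2)) ≤ log ((p + 1) * (p + 2)) :=
    log_le_log (by positivity) (by gcongr)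
  unfold logBPow
  linarith

lemma le_two_rpow_neg_div_of_pow_mul_le_one {r : ℝ} {k n : ℕ} (hk : 0 < k)
    (hr : r ^ k * 2 ^ n ≤ 1) : r ≤ 2 ^ (-(n / k : ℝ)) := by
  rcases le_or_gt r 0 with hr0 | hr0
  · exact hr0.trans (rpow_pos_of_pos two_pos _).le
  have hpow : ((2 : ℝ) ^ (-(n / k : ℝ))) ^ k = (2 ^ n)⁻¹ := by
    rw [← rpow_natCast, ← rpow_mul zero_le_two, neg_mul, div_mul_cancel₀ _ (by positivity),
      rpow_neg zero_le_two, rpow_natCast]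
  rw [← pow_le_pow_iff_left₀ hr0.le (by positivity) hk.ne', hpow,
    ← one_div, le_div_iff₀ (by positivity)]
  exact hr

lemma logBPow_neg_of_certificate {p r : ℝ} (k m n : ℕ) (hk : 0 < k) (hm : 0 < m)
    (hap : (m / k : ℝ) ≤ p) (hpb : p ≤ n / k) (hr : r ^ k * 2 ^ n ≤ 1)
    (hcert : ((n / k + 2) / (n / k)) ^ n * (1 - r) ^ m * 4 ^ k <
      ((m / k + 1) * (m / k + 2)) ^ k) :
    logBPow p < 0 := by
  have ha : (0 : ℝ) < m / k := by positivity
  have hb : (0 : ℝ) < n / k := ha.trans_le (hap.trans hpb)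
  have hrb := le_two_rpow_neg_div_of_pow_mul_le_one hk hr
  have hr1 : 0 < 1 - r :=
    sub_pos.2 (hrb.trans_lt (rpow_lt_one_of_one_lt_of_neg one_lt_two (neg_neg_of_pos hb)))
  refine (logBPow_le_of_mem_Icc ha hap hpb hrb).trans_lt ?_
  have h := log_lt_log (by positivity) hcert
  rw [log_mul (by positivity) (by positivity), log_mul (by positivity) (by positivity),
    log_pow, log_pow, log_pow, log_pow] at h
  have hk_pos : (0 : ℝ) < k := by positivity
  refine neg_of_mul_neg_right (a := (k : ℝ)) ?_ hk_pos.le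
  rw [mul_sub, mul_add, mul_add, ← mul_assoc, ← mul_assoc, mul_div_cancel₀ _ hk_pos.ne',
    mul_div_cancel₀ _ hk_pos.ne']
  linarith

lemma logBPow_neg_of_mem_Icc {p : ℝ} (hp : p ∈ Set.Icc (13 / 10) 8) : logBPow p < 0 := by
  obtain ⟨hp13, hp8⟩ := hp
  rcases le_or_gt p (14 / 10) with h | h
  · exact logBPow_neg_of_certificate (r := 189 / 500) 10 13 14 (by norm_num) (by norm_num)
      (by norm_num; linarith) (by norm_num; linarith) (by norm_num) (by norm_num)
  rcases le_or_gt p (15 / 10) with h | h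
  · exact logBPow_neg_of_certificate (r := 7 / 20) 10 14 15 (by norm_num) (by norm_num)
      (by norm_num; linarith) (by norm_num; linarith) (by norm_num) (by norm_num)
  rcases le_or_gt p (17 / 10) with h | h
  · exact logBPow_neg_of_certificate (r := 307 / 1000) 10 15 17 (by norm_num) (by norm_num)
      (by norm_num; linarith) (by norm_num; linarith) (by norm_num) (by norm_num)
  rcases le_or_gt p (20 / 10) with h | h
  · exact logBPow_neg_of_certificate (r := 1 / 4) 10 17 20 (by norm_num) (by norm_num)
      (by norm_num; linarith) (by norm_num; linarith) (by norm_num) (by norm_num)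
  rcases le_or_gt p (25 / 10) with h | h
  · exact logBPow_neg_of_certificate (r := 17 / 100) 10 20 25 (by norm_num) (by norm_num)
      (by norm_num; linarith) (by norm_num; linarith) (by norm_num) (by norm_num)
  rcases le_or_gt p (35 / 10) with h | h
  · exact logBPow_neg_of_certificate (r := 11 / 125) 10 25 35 (by norm_num) (by norm_num)
      (by norm_num; linarith) (by norm_num; linarith) (by norm_num) (by norm_num)
  exact logBPow_neg_of_certificate (r := 0) 10 35 80 (by norm_num) (by norm_num)
      (by norm_num; linarith) (by norm_num; linarith) (by norm_num) (by norm_num)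

theorem stmt7 (p : ℝ) (hp1 : 1 < p) (hp8 : p ≤ 8) :
    ((p + 2) / p) * ((p + 1) * (p + 2)) ^ (-(1 : ℝ) / p) * 4 ^ (1 / p) *
        (1 - 2 ^ (-p)) < 1 := by
  have hp : 0 < p := by linarith
  rw [eq_exp_logBPow_div hp, exp_lt_one_iff]
  refine div_neg_of_neg_of_pos ?_ hp
  rcases le_or_gt p (13 / 10) with h | h
  · exact logBPow_neg_of_one_lt_of_le hp1 h
  · exact logBPow_neg_of_mem_Icc ⟨h.le, hp8⟩
end

section
/- For every real p ≥ 11 and every a > 0, one has log((p+2)/p) + log(1 - e^{-2a}) + (log 2 - log(p+2) - log a)/p < 0; equivalently, G_p(a) := ((p+2)/p)(1 - e^{-2a})(2/((p+2)a))^{1/p} < 1. -/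
/-!
Multiplied by `p`, the logarithmic inequality splits into two negative brackets,
`(p log((p+2)/p) - log((p+2)/2)) + (p log(1 - e^{-2a}) - log a)`.
The first is negative for `p ≥ 11`: `log y ≤ sinh (log y)` gives `p log((p+2)/p) ≤ 2 - 2/(p+2)`,
while the tangent line of `log` at `13` together with `log(13/2) > 24/13` bounds `log((p+2)/2)`
from below. The second is negative for `p ≥ 8`, since `(1 - e^{-2a})^8 < a` on `(0, 1)`.
The bound on `G_p` follows because its logarithm is the left-hand side.
-/

open Real

namespace Real

lemma log_thirteen_div_two_gt : (24 : ℝ) / 13 < log (13 / 2) := by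
  rw [lt_log_iff_exp_lt (by norm_num)]
  refine (pow_lt_pow_iff_left₀ (exp_pos _).le (by norm_num) (by norm_num : (13 : ℕ) ≠ 0)).mp ?_
  calc exp (24 / 13) ^ 13 = exp 1 ^ 24 := by rw [← exp_nat_mul, ← exp_nat_mul]; norm_num
    _ < 2.7182818286 ^ 24 := pow_lt_pow_left₀ exp_one_lt_d9 (exp_pos 1).le (by norm_num)
    _ < (13 / 2) ^ 13 := by norm_num

lemma exp_neg_two_gt : (0.13 : ℝ) < exp (-2) := by
  rw [exp_neg, lt_inv_comm₀ (by norm_num) (exp_pos 2)]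
  calc exp 2 = exp 1 ^ 2 := by rw [← exp_nat_mul]; norm_num
    _ < 2.7182818286 ^ 2 := pow_lt_pow_left₀ exp_one_lt_d9 (exp_pos 1).le (by norm_num)
    _ < 0.13⁻¹ := by norm_num

lemma log_le_half_sub_inv {y : ℝ} (hy : 1 ≤ y) : log y ≤ (y - y⁻¹) / 2 := by
  rw [← sinh_log (by linarith)]
  exact self_le_sinh_iff.mpr (log_nonneg hy)

lemma one_sub_exp_neg_two_mul_pos {a : ℝ} (ha : 0 < a) : 0 < 1 - exp (-2 * a) := by
  have : exp (-2 * a) < 1 := exp_lt_one_iff.mpr (by linarith)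
  linarith

lemma one_sub_exp_neg_two_mul_pow_eight_lt {a : ℝ} (ha : 0 < a) (ha1 : a < 1) :
    (1 - exp (-2 * a)) ^ 8 < a := by
  have hpos := one_sub_exp_neg_two_mul_pos ha
  rcases lt_or_ge a (2 / 5) with hsmall | hlarge
  · have hle : 1 - exp (-2 * a) ≤ 2 * a := by linarith [add_one_le_exp (-2 * a)]
    have ha7 : a ^ 7 < (2 / 5) ^ 7 := pow_lt_pow_left₀ hsmall ha.le (by norm_num)
    calc (1 - exp (-2 * a)) ^ 8 ≤ (2 * a) ^ 8 := pow_le_pow_left₀ hpos.le hle 8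
      _ = a * (256 * a ^ 7) := by ring
      _ < a * 1 := mul_lt_mul_of_pos_left (by nlinarith) ha
      _ = a := mul_one a
  · have hle : 1 - exp (-2 * a) < 0.87 := by
      have : exp (-2) ≤ exp (-2 * a) := exp_le_exp.mpr (by linarith)
      linarith [exp_neg_two_gt]
    calc (1 - exp (-2 * a)) ^ 8 < 0.87 ^ 8 := pow_lt_pow_left₀ hle hpos.le (by norm_num)
      _ < 2 / 5 := by norm_num
      _ ≤ a := hlarge

lemma mul_log_one_sub_exp_neg_two_mul_lt_log {p a : ℝ} (hp : 8 ≤ p) (ha : 0 < a) :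
    p * log (1 - exp (-2 * a)) < log a := by
  have hpos := one_sub_exp_neg_two_mul_pos ha
  have hL : log (1 - exp (-2 * a)) < 0 := log_neg hpos (by linarith [exp_pos (-2 * a)])
  rcases le_or_gt 1 a with h1 | h1
  · nlinarith [log_nonneg h1]
  · calc p * log (1 - exp (-2 * a)) ≤ 8 * log (1 - exp (-2 * a)) :=
          mul_le_mul_of_nonpos_right hp hL.le
      _ = log ((1 - exp (-2 * a)) ^ 8) := by rw [log_pow]; norm_num
      _ < log a := log_lt_log (by positivity) (one_sub_exp_neg_two_mul_pow_eight_lt ha h1)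

lemma mul_log_add_two_div_self_le {p : ℝ} (hp : 0 < p) :
    p * log ((p + 2) / p) ≤ 2 - 2 / (p + 2) := by
  have hy : 1 ≤ (p + 2) / p := by rw [le_div_iff₀ hp]; linarith
  calc p * log ((p + 2) / p) ≤ p * (((p + 2) / p - ((p + 2) / p)⁻¹) / 2) :=
        mul_le_mul_of_nonneg_left (log_le_half_sub_inv hy) hp.le
    _ = 2 - 2 / (p + 2) := by field_simp; ring

lemma mul_log_add_two_div_self_lt_log {p : ℝ} (hp : 11 ≤ p) :
    p * log ((p + 2) / p) < log ((p + 2) / 2) := by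
  have hsplit : log ((p + 2) / 2) = log (13 / 2) + log ((p + 2) / 13) := by
    rw [← log_mul (by norm_num) (by positivity)]; ring_nf
  have htail : 1 - ((p + 2) / 13)⁻¹ ≤ log ((p + 2) / 13) :=
    one_sub_inv_le_log_of_pos (by positivity)
  have hfrac : 11 / (p + 2) ≤ 11 / 13 :=
    div_le_div_of_nonneg_left (by norm_num) (by norm_num) (by linarith)
  have : 2 - 2 / (p + 2) < log (13 / 2) + (1 - ((p + 2) / 13)⁻¹) := by
    rw [inv_div]
    have : 2 - 2 / (p + 2) = 1 - 13 / (p + 2) + 11 / (p + 2) + 1 := by ring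
    linarith [log_thirteen_div_two_gt]
  linarith [mul_log_add_two_div_self_le (by linarith : 0 < p)]

end Real

theorem stmt10 (p : ℝ) (hp : 11 ≤ p) (a : ℝ) (ha : 0 < a) :
    Real.log ((p + 2) / p) + Real.log (1 - Real.exp (-2 * a)) +
        (Real.log 2 - Real.log (p + 2) - Real.log a) / p < 0 ∧
      ((p + 2) / p) * (1 - Real.exp (-2 * a)) * (2 / ((p + 2) * a)) ^ (1 / p) < 1 := by
  have hp0 : 0 < p := by linarith
  have hE := one_sub_exp_neg_two_mul_pos ha
  have hlog : Real.log ((p + 2) / p) + Real.log (1 - Real.exp (-2 * a)) +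
      (Real.log 2 - Real.log (p + 2) - Real.log a) / p < 0 := by
    refine neg_of_mul_neg_right ?_ hp0.le
    have hsplit : p * (Real.log ((p + 2) / p) + Real.log (1 - Real.exp (-2 * a)) +
        (Real.log 2 - Real.log (p + 2) - Real.log a) / p) =
        (p * log ((p + 2) / p) - log ((p + 2) / 2)) +
          (p * log (1 - exp (-2 * a)) - log a) := by
      rw [log_div (by linarith) two_ne_zero]; field_simp; ring
    rw [hsplit]
    linarith [mul_log_add_two_div_self_lt_log hp,
      mul_log_one_sub_exp_neg_two_mul_lt_log (by linarith : (8 : ℝ) ≤ p) ha]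
  refine ⟨hlog, ?_⟩
  rw [← log_neg_iff (by positivity)]
  convert hlog using 1
  rw [log_mul (by positivity) (by positivity), log_mul (by positivity) hE.ne',
    log_rpow (by positivity), log_div two_ne_zero (by positivity), log_mul (by linarith) ha.ne']
  ring
end

section
/- For every real p with 1 < p ≤ 8, at the point y = 1/2 the second derivative of L(y) = log(1 - y^{p+1} - (1-y)^{p+1}) - (1/p)(log y + log(1-y)) satisfies L''(1/2) = -p(p+1)·2^{2-p}/(1 - 2^{-p}) + 8/p < 0. -/
/-!
Since `N'(1/2) = 0` by symmetry, `L''(1/2) = N''(1/2) / N(1/2) + 8 / p`, which gives the formula.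
With `E = 2^p` this value is `8 / p - 4 p (p + 1) / (E - 1)`, so its negativity amounts to
`2^(p+1) < p² (p + 1) + 2`. By Bernoulli's inequality `2^q` lies below its chord
`2^n (q - n + 1)` on each `[n, n + 1]`, and for `p + 1 ≤ 9` that chord stays below the cubic.
-/

open Real Filter Topology

lemma two_rpow_le_chord (n : ℕ) {q : ℝ} (hn : n ≤ q) (hq : q ≤ n + 1) :
    (2 : ℝ) ^ q ≤ 2 ^ n * (q - n + 1) := by
  have hfrac : (2 : ℝ) ^ (q - n) ≤ 1 + (q - n) := by
    simpa [one_add_one_eq_two] using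
      rpow_one_add_le_one_add_mul_self (s := 1) (by norm_num) (sub_nonneg.2 hn) (by linarith)
  calc (2 : ℝ) ^ q = 2 ^ n * 2 ^ (q - n) := by
        rw [← rpow_natCast, ← rpow_add two_pos, add_sub_cancel]
    _ ≤ 2 ^ n * (q - n + 1) := by
        gcongr
        linarith

lemma two_rpow_succ_lt (p : ℝ) (hp1 : 1 < p) (hp8 : p ≤ 8) :
    (2 : ℝ) ^ (p + 1) < p ^ 2 * (p + 1) + 2 := by
  obtain ⟨n, hn, hnp, hpn⟩ : ∃ n : ℕ, n ≤ 8 ∧ (n : ℝ) ≤ p ∧ p < n + 1 :=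
    ⟨⌊p⌋₊, Nat.floor_le_of_le hp8, Nat.floor_le (by linarith), Nat.lt_floor_add_one p⟩
  have hchord := two_rpow_le_chord (n + 1) (q := p + 1) (by push_cast; linarith)
    (by push_cast; linarith)
  interval_cases n <;> norm_num at hnp hpn hchord ⊢
  all_goals nlinarith [mul_pos (sub_pos.2 hp1) (sub_pos.2 hp1)]

/-- `oneSubPowSum (p + 1)` is the function `N` of the paper. -/
noncomputable def oneSubPowSum (q y : ℝ) : ℝ := 1 - y ^ q - (1 - y) ^ q

noncomputable def oneSubPowSumDeriv (q y : ℝ) : ℝ := q * ((1 - y) ^ (q - 1) - y ^ (q - 1))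

lemma hasDerivAt_one_sub_rpow {q y : ℝ} (h : 1 - y ≠ 0 ∨ 1 ≤ q) :
    HasDerivAt (fun y => (1 - y) ^ q) (-(q * (1 - y) ^ (q - 1))) y := by
  simpa using ((hasDerivAt_id y).const_sub 1).rpow_const h

lemma hasDerivAt_oneSubPowSum {q y : ℝ} (hy0 : y ≠ 0) (hy1 : 1 - y ≠ 0) :
    HasDerivAt (oneSubPowSum q) (oneSubPowSumDeriv q y) y :=
  (((hasDerivAt_rpow_const (Or.inl hy0)).const_sub 1).sub
    (hasDerivAt_one_sub_rpow (Or.inl hy1))).congr_deriv (by rw [oneSubPowSumDeriv]; ring)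

lemma hasDerivAt_oneSubPowSumDeriv {q y : ℝ} (hy0 : y ≠ 0) (hy1 : 1 - y ≠ 0) :
    HasDerivAt (oneSubPowSumDeriv q)
      (-(q * (q - 1)) * ((1 - y) ^ (q - 2) + y ^ (q - 2))) y :=
  (((hasDerivAt_one_sub_rpow (Or.inl hy1)).sub
    (hasDerivAt_rpow_const (Or.inl hy0))).const_mul q).congr_deriv (by
      rw [sub_sub, one_add_one_eq_two]; ring)

lemma oneSubPowSum_half (q : ℝ) : oneSubPowSum q (1 / 2) = 1 - 2 ^ (1 - q) := by
  rw [oneSubPowSum, show (1 : ℝ) - 1 / 2 = 1 / 2 by norm_num,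
    div_rpow one_pos.le two_pos.le, one_rpow, rpow_sub two_pos, rpow_one]
  ring

lemma oneSubPowSumDeriv_half (q : ℝ) : oneSubPowSumDeriv q (1 / 2) = 0 := by
  norm_num [oneSubPowSumDeriv]

lemma oneSubPowSum_succ_half_ne_zero {p : ℝ} (hp : p ≠ 0) :
    oneSubPowSum (p + 1) (1 / 2) ≠ 0 := by
  rw [oneSubPowSum_half, sub_ne_zero, ne_comm, ← rpow_zero 2,
    Ne, rpow_right_inj two_pos (by norm_num)]
  contrapose! hp
  linarith

noncomputable def logObjective (p y : ℝ) : ℝ :=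
  log (oneSubPowSum (p + 1) y) - 1 / p * (log y + log (1 - y))

noncomputable def logObjectiveDeriv (p y : ℝ) : ℝ :=
  oneSubPowSumDeriv (p + 1) y / oneSubPowSum (p + 1) y - 1 / p * (y⁻¹ - (1 - y)⁻¹)

lemma hasDerivAt_logObjective {p y : ℝ} (hN : oneSubPowSum (p + 1) y ≠ 0) (hy0 : y ≠ 0)
    (hy1 : 1 - y ≠ 0) : HasDerivAt (logObjective p) (logObjectiveDeriv p y) y :=
  (((hasDerivAt_oneSubPowSum hy0 hy1).log hN).sub (((hasDerivAt_log hy0).add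
    (((hasDerivAt_id y).const_sub 1).log hy1)).const_mul (1 / p))).congr_deriv (by
      rw [logObjectiveDeriv]; simp only [id]; ring)

lemma deriv_logObjective_eventuallyEq {p : ℝ} (hp : p ≠ 0) :
    deriv (logObjective p) =ᶠ[𝓝 (1 / 2)] logObjectiveDeriv p := by
  have hN : ∀ᶠ y in 𝓝 (1 / 2 : ℝ), oneSubPowSum (p + 1) y ≠ 0 :=
    (hasDerivAt_oneSubPowSum (by norm_num) (by norm_num)).continuousAt.eventually_ne
      (oneSubPowSum_succ_half_ne_zero hp)
  have hy0 : ∀ᶠ y in 𝓝 (1 / 2 : ℝ), y ≠ 0 := eventually_ne_nhds (by norm_num)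
  have hy1 : ∀ᶠ y in 𝓝 (1 / 2 : ℝ), 1 - y ≠ 0 :=
    (continuous_const.sub continuous_id).continuousAt.eventually_ne (by norm_num)
  filter_upwards [hN, hy0, hy1] with y hNy hy0y hy1y
  exact (hasDerivAt_logObjective hNy hy0y hy1y).deriv

lemma hasDerivAt_logObjectiveDeriv_half {p : ℝ} (hp : p ≠ 0) :
    HasDerivAt (logObjectiveDeriv p)
      (-p * (p + 1) * 2 ^ (2 - p) / (1 - 2 ^ (-p)) + 8 / p) (1 / 2) := by
  have h0 : (1 / 2 : ℝ) ≠ 0 := by norm_num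
  have h1 : (1 - 1 / 2 : ℝ) ≠ 0 := by norm_num
  have hQ := (hasDerivAt_oneSubPowSumDeriv (q := p + 1) h0 h1).div
    (hasDerivAt_oneSubPowSum h0 h1) (oneSubPowSum_succ_half_ne_zero hp)
  have hR := ((hasDerivAt_inv h0).sub (((hasDerivAt_id _).const_sub 1).inv h1)).const_mul (1 / p)
  refine (hQ.sub hR).congr_deriv ?_
  rw [oneSubPowSumDeriv_half, oneSubPowSum_half]
  have hhalf : (1 - 1 / 2 : ℝ) ^ (p + 1 - 2) + (1 / 2) ^ (p + 1 - 2) = 2 ^ (2 - p) := by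
    rw [show (1 - 1 / 2 : ℝ) = 1 / 2 by norm_num, ← mul_two, one_div, inv_rpow two_pos.le,
      ← rpow_neg two_pos.le, ← rpow_add_one two_ne_zero]
    ring_nf
  have hD := oneSubPowSum_succ_half_ne_zero hp
  rw [oneSubPowSum_half, show 1 - (p + 1) = -p by ring] at hD
  rw [hhalf, show 1 - (p + 1) = -p by ring]
  field_simp
  ring

lemma deriv_deriv_logObjective_half {p : ℝ} (hp : p ≠ 0) :
    deriv (deriv (logObjective p)) (1 / 2) =
      -p * (p + 1) * 2 ^ (2 - p) / (1 - 2 ^ (-p)) + 8 / p :=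
  (deriv_logObjective_eventuallyEq hp).deriv_eq.trans (hasDerivAt_logObjectiveDeriv_half hp).deriv

lemma second_deriv_formula_neg {p : ℝ} (hp1 : 1 < p) (hp8 : p ≤ 8) :
    -p * (p + 1) * 2 ^ (2 - p) / (1 - 2 ^ (-p)) + 8 / p < 0 := by
  have hp0 : 0 < p := by linarith
  have hE : 1 < (2 : ℝ) ^ p := one_lt_rpow (by norm_num) hp0
  have hkey := two_rpow_succ_lt p hp1 hp8
  rw [rpow_add_one two_ne_zero] at hkey
  have hvalue : -p * (p + 1) * 2 ^ (2 - p) / (1 - 2 ^ (-p)) + 8 / p =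
      (8 * (2 ^ p - 1) - 4 * p ^ 2 * (p + 1)) / (p * (2 ^ p - 1)) := by
    have hE1 : (2 : ℝ) ^ p - 1 ≠ 0 := (sub_pos.2 hE).ne'
    rw [rpow_sub two_pos, rpow_neg two_pos.le, rpow_two]
    field_simp
    ring
  rw [hvalue]
  exact div_neg_of_neg_of_pos (by linarith) (mul_pos hp0 (by linarith))

theorem stmt12 (p : ℝ) (hp1 : 1 < p) (hp8 : p ≤ 8) :
    deriv (deriv (fun y : ℝ =>
        Real.log (1 - y ^ (p + 1) - (1 - y) ^ (p + 1)) -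
          (1 / p) * (Real.log y + Real.log (1 - y)))) (1 / 2) =
        -p * (p + 1) * 2 ^ (2 - p) / (1 - 2 ^ (-p)) + 8 / p ∧
      -p * (p + 1) * 2 ^ (2 - p) / (1 - 2 ^ (-p)) + 8 / p < 0 :=
  ⟨deriv_deriv_logObjective_half (by linarith), second_deriv_formula_neg hp1 hp8⟩
end
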